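/- arXiv:2311.01533 — 3 statements merged into one kernel-verified Lean document; each statement's English description precedes it below -/
import Mathlib

section
/- Let $q \ge 1$ be an integer. For every $t \in [-q, q]$, $\sum_{n=-q}^{q} |\mathrm{sinc}(t - n)| \le 3 + \frac{2}{\pi}\log(2q)$. -/
open scoped Real

/-- Normalized cardinal sine: `sinc x = sin (π x) / (π x)` for `x ≠ 0`, `sinc 0 = 1`. -/
noncomputable def sinc (x : ℝ) : ℝ := if x = 0 then 1 else Real.sin (π * x) / (π * x)

/-!
With `k = ⌊t⌋`, the two nodes `k` and `k + 1` contribute at most `1` each, since `|sinc| ≤ 1`.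
Every other node `n` satisfies `|sinc (t - n)| ≤ 1 / (π |t - n|)`, and on each side of `t` the
distances `|t - n|` dominate distinct integers in `[1, 2q]`; so each tail is at most
`harmonic (2q) / π ≤ (1 + log (2q)) / π`, and `2 / π ≤ 1` absorbs the remaining constant.
-/

open Finset

lemma abs_sinc_le_one (x : ℝ) : |sinc x| ≤ 1 := by
  unfold sinc
  split_ifs with hx
  · simp
  · rw [abs_div, div_le_one (abs_pos.mpr (mul_ne_zero Real.pi_ne_zero hx))]
    exact Real.abs_sin_le_abs

lemma abs_sinc_le_inv_pi_mul {x d : ℝ} (hd : 0 < d) (hdx : d ≤ |x|) :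
    |sinc x| ≤ (π * d)⁻¹ := by
  have hx : x ≠ 0 := abs_pos.mp (hd.trans_le hdx)
  rw [sinc, if_neg hx, abs_div, abs_mul, abs_of_pos Real.pi_pos, div_eq_mul_inv]
  calc |Real.sin (π * x)| * (π * |x|)⁻¹ ≤ 1 * (π * d)⁻¹ := by
        gcongr
        exact Real.abs_sin_le_one _
    _ = (π * d)⁻¹ := one_mul _

lemma sum_inv_le_harmonic {ι : Type*} {s : Finset ι} {f : ι → ℕ} {N : ℕ}
    (hf : Set.InjOn f s) (hfs : ∀ i ∈ s, f i ∈ Icc 1 N) :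
    ∑ i ∈ s, ((f i : ℝ))⁻¹ ≤ harmonic N := by
  rw [← sum_image (f := fun m : ℕ => (m : ℝ)⁻¹) hf, harmonic_eq_sum_Icc]
  push_cast
  exact sum_le_sum_of_subset_of_nonneg (image_subset_iff.mpr hfs) fun _ _ _ => by positivity

lemma sum_abs_sinc_le_harmonic {s : Finset ℤ} {t : ℝ} {f : ℤ → ℕ} {N : ℕ}
    (hf : Set.InjOn f s) (hfs : ∀ n ∈ s, f n ∈ Icc 1 N)
    (hdist : ∀ n ∈ s, (f n : ℝ) ≤ |t - n|) :
    ∑ n ∈ s, |sinc (t - n)| ≤ π⁻¹ * harmonic N := by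
  calc ∑ n ∈ s, |sinc (t - n)| ≤ ∑ n ∈ s, π⁻¹ * ((f n : ℝ))⁻¹ := by
        refine sum_le_sum fun n hn => ?_
        have hpos : (0 : ℝ) < f n := by exact_mod_cast (mem_Icc.mp (hfs n hn)).1
        rw [← mul_inv]
        exact abs_sinc_le_inv_pi_mul hpos (hdist n hn)
    _ ≤ π⁻¹ * harmonic N := by
        rw [← mul_sum]
        exact mul_le_mul_of_nonneg_left (sum_inv_le_harmonic hf hfs) (by positivity)

lemma sum_abs_sinc_Ico_le {a k : ℤ} {N : ℕ} {t : ℝ} (hkt : k ≤ t) (hN : k - a ≤ N) :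
    ∑ n ∈ Ico a k, |sinc (t - n)| ≤ π⁻¹ * harmonic N := by
  refine sum_abs_sinc_le_harmonic (f := fun n => (k - n).toNat) ?_ (fun n hn => ?_)
    fun n hn => ?_
  · intro m hm n hn hmn
    simp only [coe_Ico, Set.mem_Ico] at hm hn hmn
    omega
  · rw [mem_Ico] at hn
    rw [mem_Icc]
    omega
  · have hnk : n < k := (mem_Ico.mp hn).2
    have hcast : ((k - n).toNat : ℝ) = k - n := by
      exact_mod_cast Int.toNat_of_nonneg (sub_nonneg.mpr hnk.le)
    have hnk' : (n : ℝ) + 1 ≤ k := by exact_mod_cast hnk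
    rw [hcast, abs_of_pos (by linarith)]
    linarith

lemma sum_abs_sinc_Ioc_le {k b : ℤ} {N : ℕ} {t : ℝ} (htk : t ≤ k) (hN : b - k ≤ N) :
    ∑ n ∈ Ioc k b, |sinc (t - n)| ≤ π⁻¹ * harmonic N := by
  refine sum_abs_sinc_le_harmonic (f := fun n => (n - k).toNat) ?_ (fun n hn => ?_)
    fun n hn => ?_
  · intro m hm n hn hmn
    simp only [coe_Ioc, Set.mem_Ioc] at hm hn hmn
    omega
  · rw [mem_Ioc] at hn
    rw [mem_Icc]
    omega
  · have hkn : k < n := (mem_Ioc.mp hn).1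
    have hcast : ((n - k).toNat : ℝ) = n - k := by
      exact_mod_cast Int.toNat_of_nonneg (sub_nonneg.mpr hkn.le)
    have hkn' : (k : ℝ) + 1 ≤ n := by exact_mod_cast hkn
    rw [hcast, abs_of_neg (by linarith)]
    linarith

lemma sum_abs_sinc_Icc_self_add_one_le (k : ℤ) (t : ℝ) :
    ∑ n ∈ Icc k (k + 1), |sinc (t - n)| ≤ 2 := by
  calc _ ≤ #(Icc k (k + 1)) • (1 : ℝ) := sum_le_card_nsmul _ _ _ fun _ _ => abs_sinc_le_one _
    _ = 2 := by rw [Int.card_Icc, show (k + 1 + 1 - k).toNat = 2 by omega]; norm_num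

lemma sum_Icc_le_sum_Ico_add_sum_Icc_add_sum_Ioc {f : ℤ → ℝ} (hf : ∀ n, 0 ≤ f n) (a b k : ℤ) :
    ∑ n ∈ Icc a b, f n ≤
      ∑ n ∈ Ico a k, f n + (∑ n ∈ Icc k (k + 1), f n + ∑ n ∈ Ioc (k + 1) b, f n) := by
  have hcover : Icc a b ⊆ Ico a k ∪ (Icc k (k + 1) ∪ Ioc (k + 1) b) := by
    intro n
    simp only [mem_union, mem_Ico, mem_Icc, mem_Ioc]
    omega
  calc _ ≤ ∑ n ∈ Ico a k ∪ (Icc k (k + 1) ∪ Ioc (k + 1) b), f n :=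
        sum_le_sum_of_subset_of_nonneg hcover fun n _ _ => hf n
    _ = _ := by
        rw [sum_union, sum_union] <;> rw [disjoint_left] <;> intro n <;>
          simp only [mem_union, mem_Ico, mem_Icc, mem_Ioc] <;> omega

theorem sinc_weights_l1_bound_general
    (q : ℕ) (t : ℝ) (ht : t ∈ Set.Icc (-(q : ℝ)) (q : ℝ)) :
    ∑ n ∈ Finset.Icc (-(q : ℤ)) (q : ℤ), |sinc (t - (n : ℝ))| ≤
      3 + (2 / π) * Real.log (2 * (q : ℝ)) := by
  set k := ⌊t⌋
  have hk : -(q : ℤ) ≤ k ∧ k ≤ q :=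
    ⟨Int.le_floor.mpr (mod_cast ht.1), Int.floor_le_iff.mpr (by push_cast; linarith [ht.2])⟩
  have hleft := sum_abs_sinc_Ico_le (a := -q) (N := 2 * q) (Int.floor_le t) (by push_cast; omega)
  have hright := sum_abs_sinc_Ioc_le (k := k + 1) (b := q) (N := 2 * q)
    (by push_cast; exact (Int.lt_floor_add_one t).le) (by push_cast; omega)
  have hharm : π⁻¹ * harmonic (2 * q) ≤ π⁻¹ * (1 + Real.log (2 * q)) :=
    mul_le_mul_of_nonneg_left (mod_cast harmonic_le_one_add_log (2 * q))
      (inv_nonneg.mpr Real.pi_pos.le)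
  have hpi : 2 / π ≤ 1 := (div_le_one Real.pi_pos).mpr Real.two_le_pi
  calc _ ≤ _ := sum_Icc_le_sum_Ico_add_sum_Icc_add_sum_Ioc (fun _ => abs_nonneg _) _ _ k
    _ ≤ π⁻¹ * harmonic (2 * q) + (2 + π⁻¹ * harmonic (2 * q)) := by
        gcongr
        exact sum_abs_sinc_Icc_self_add_one_le k t
    _ ≤ 2 + 2 * (π⁻¹ * (1 + Real.log (2 * q))) := by linarith
    _ = 2 + 2 / π + 2 / π * Real.log (2 * q) := by ring
    _ ≤ 3 + 2 / π * Real.log (2 * q) := by linarith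

/-- `ℓ¹` bound on the cardinal sine interpolation weights: for `t ∈ [-q, q]`,
`∑_{n=-q}^{q} |sinc(t - n)| ≤ 3 + (2/π) log(2q)`. -/
theorem sinc_weights_l1_bound
    (q : ℕ) (hq : 1 ≤ q) (t : ℝ) (ht : t ∈ Set.Icc (-(q : ℝ)) (q : ℝ)) :
    ∑ n ∈ Finset.Icc (-(q : ℤ)) (q : ℤ), |sinc (t - (n : ℝ))| ≤
      3 + (2 / π) * Real.log (2 * (q : ℝ)) :=
  sinc_weights_l1_bound_general q t ht
end

section
/- Let $q \ge 0$ be an integer and let $X_{-q}, \dots, X_q$ be independent real-valued random variables with $X_n$ Gaussian with mean $\mu_n$ and variance $\sigma_n^2$. For $t \in \mathbb{R}$ define $X_{\mathrm{interp}}(t) = \sum_{n=-q}^{q} \mathrm{sinc}(t - n)\, X_n$. Then the variance of $X_{\mathrm{interp}}(t)$ equals $\sum_{n=-q}^{q} \mathrm{sinc}^2(t-n)\, \sigma_n^2$ and satisfies $\mathrm{Var}(X_{\mathrm{interp}}(t)) \le \Big(3 + \frac{4}{\pi^2}\Big)\max_{-q \le n \le q} \sigma_n^2$. -/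
/-!
By independence, the variance of `∑ₙ sinc (t - n) Xₙ` is `∑ₙ sinc² (t - n) σₙ²`, which is at most
`(∑ₙ sinc² (t - n)) · maxₙ σₙ²`. Writing `t - n = u + k` with `u = fract t ∈ [0, 1)` and
`k = ⌊t⌋ - n`, the `k < 0` terms are `sinc² (1 - u + j)` by evenness, so the whole series splits
into two one-sided series `∑ⱼ sinc² (w + j)` with `w ≥ 0`. Each is at most
`1 + π⁻² ∑ⱼ (j + 1)⁻² = 1 + 1/6`, from `sinc² ≤ 1` and `sinc² x ≤ (π x)⁻²`; the total `7/3` is below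
`3 + 4/π²`.
-/

open scoped Real NNReal
open MeasureTheory ProbabilityTheory

lemma sinc_neg (x : ℝ) : sinc (-x) = sinc x := by
  by_cases hx : x = 0
  · simp [hx]
  · simp [sinc, hx, Real.sin_neg, neg_div_neg_eq]

lemma sinc_sq_le_one (x : ℝ) : sinc x ^ 2 ≤ 1 := by
  by_cases hx : x = 0
  · simp [sinc, hx]
  · rw [sinc, if_neg hx, div_pow, div_le_one (by positivity), ← sq_abs, ← sq_abs (π * x)]
    exact pow_le_pow_left₀ (abs_nonneg _) Real.abs_sin_le_abs 2

lemma sinc_sq_le_one_div_sq {x : ℝ} (hx : x ≠ 0) : sinc x ^ 2 ≤ 1 / (π * x) ^ 2 := by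
  rw [sinc, if_neg hx, div_pow]
  gcongr
  exact Real.sin_sq_le_one _

lemma hasSum_one_div_pi_mul_succ_sq :
    HasSum (fun j : ℕ => 1 / (π * (j + 1)) ^ 2) (1 / 6) := by
  have hzeta : HasSum (fun j : ℕ => 1 / ((j : ℝ) + 1) ^ 2) (π ^ 2 / 6) := by
    simpa using (hasSum_nat_add_iff' 1).mpr hasSum_zeta_two
  have h := hzeta.mul_left (π ^ 2)⁻¹
  rw [show (π ^ 2)⁻¹ * (π ^ 2 / 6) = 1 / 6 by field_simp] at h
  refine h.congr_fun fun j => ?_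
  rw [mul_pow, one_div, mul_inv, mul_one_div, div_eq_mul_inv]

lemma sinc_sq_add_succ_le {w : ℝ} (hw : 0 ≤ w) (j : ℕ) :
    sinc (w + (j + 1 : ℕ)) ^ 2 ≤ 1 / (π * (j + 1)) ^ 2 := by
  push_cast
  refine (sinc_sq_le_one_div_sq (by positivity)).trans ?_
  rw [← add_assoc]
  gcongr
  linarith

lemma summable_sinc_sq_add_nat {w : ℝ} (hw : 0 ≤ w) : Summable fun j : ℕ => sinc (w + j) ^ 2 :=
  (summable_nat_add_iff 1).mp <| hasSum_one_div_pi_mul_succ_sq.summable.of_nonneg_of_le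
    (fun _ => sq_nonneg _) (sinc_sq_add_succ_le hw)

lemma tsum_sinc_sq_add_nat_le {w : ℝ} (hw : 0 ≤ w) : ∑' j : ℕ, sinc (w + j) ^ 2 ≤ 7 / 6 := by
  have hsucc := (summable_nat_add_iff 1).mpr (summable_sinc_sq_add_nat hw)
  rw [(summable_sinc_sq_add_nat hw).tsum_eq_zero_add]
  have htail : ∑' j : ℕ, sinc (w + (j + 1 : ℕ)) ^ 2 ≤ 1 / 6 :=
    (hsucc.tsum_le_tsum (sinc_sq_add_succ_le hw) hasSum_one_div_pi_mul_succ_sq.summable).trans_eq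
      hasSum_one_div_pi_mul_succ_sq.tsum_eq
  have := add_le_add (sinc_sq_le_one (w + (0 : ℕ))) htail
  linarith

-- The `ℤ`-valued cast is kept as is, matching the terms of `HasSum.of_nat_of_neg_add_one`.
lemma sinc_add_neg_succ (u : ℝ) (j : ℕ) :
    sinc (u + ((-(j + 1 : ℤ) : ℤ) : ℝ)) = sinc (1 - u + j) := by
  rw [← sinc_neg]
  push_cast
  ring_nf

lemma hasSum_sinc_sq_add_int {u : ℝ} (hu₀ : 0 ≤ u) (hu₁ : u ≤ 1) :
    HasSum (fun k : ℤ => sinc (u + k) ^ 2)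
      (∑' j : ℕ, sinc (u + j) ^ 2 + ∑' j : ℕ, sinc (1 - u + j) ^ 2) := by
  refine HasSum.of_nat_of_neg_add_one ?_ ?_
  · exact_mod_cast (summable_sinc_sq_add_nat hu₀).hasSum
  · simpa only [sinc_add_neg_succ] using (summable_sinc_sq_add_nat (sub_nonneg.mpr hu₁)).hasSum

lemma sum_sinc_sq_sub_int_le (t : ℝ) (s : Finset ℤ) : ∑ n ∈ s, sinc (t - n) ^ 2 ≤ 7 / 3 := by
  set f : ℤ → ℝ := fun k => sinc (Int.fract t + k) ^ 2
  set e := Equiv.subLeft ⌊t⌋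
  have hf : HasSum f _ :=
    hasSum_sinc_sq_add_int (Int.fract_nonneg t) (Int.fract_lt_one t).le
  have hcomp : (fun n : ℤ => sinc (t - n) ^ 2) = f ∘ e := by
    ext n
    simp only [f, e, Function.comp_apply, Equiv.subLeft_apply, Int.fract, Int.cast_sub]
    ring_nf
  rw [hcomp]
  calc ∑ n ∈ s, (f ∘ e) n
      ≤ ∑' n, (f ∘ e) n :=
        Summable.sum_le_tsum s (fun _ _ => sq_nonneg _) (e.summable_iff.mpr hf.summable)
    _ = ∑' k, f k := e.tsum_eq f
    _ = ∑' j : ℕ, sinc (Int.fract t + j) ^ 2 + ∑' j : ℕ, sinc (1 - Int.fract t + j) ^ 2 :=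
        hf.tsum_eq
    _ ≤ 7 / 6 + 7 / 6 := add_le_add (tsum_sinc_sq_add_nat_le (Int.fract_nonneg t))
          (tsum_sinc_sq_add_nat_le (sub_nonneg.mpr (Int.fract_lt_one t).le))
    _ = 7 / 3 := by norm_num

lemma Finset.sum_mul_le_sum_mul_ciSup {ι : Type*} [Fintype ι] {a b : ι → ℝ}
    (ha : ∀ i, 0 ≤ a i) : ∑ i, a i * b i ≤ (∑ i, a i) * ⨆ i, b i := by
  rw [Finset.sum_mul]
  exact Finset.sum_le_sum fun i _ =>
    mul_le_mul_of_nonneg_left (le_ciSup (Set.finite_range b).bddAbove i) (ha i)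

lemma ProbabilityTheory.iIndepFun.variance_fun_sum_const_mul {Ω ι : Type*}
    {mΩ : MeasurableSpace Ω} {μ : Measure Ω} [Fintype ι] {X : ι → Ω → ℝ}
    (hX : ∀ i, MemLp (X i) 2 μ) (hindep : iIndepFun X μ) (c : ι → ℝ) :
    Var[fun ω => ∑ i, c i * X i ω; μ] = ∑ i, c i ^ 2 * Var[X i; μ] := by
  have hsum : (fun ω => ∑ i, c i * X i ω) = ∑ i, fun ω => c i * X i ω := by
    ext ω
    simp only [Finset.sum_apply]
  rw [hsum, IndepFun.variance_sum (fun i _ => (hX i).const_mul (c i))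
    fun i _ j _ hij => (hindep.indepFun hij).comp (measurable_const_mul _) (measurable_const_mul _)]
  exact Finset.sum_congr rfl fun i _ => variance_const_mul (c i) (X i) μ

theorem sinc_variance_propagation_general
    (q : ℕ) {Ω : Type*} [MeasureSpace Ω] [IsProbabilityMeasure (ℙ : Measure Ω)]
    (X : {n : ℤ // n ∈ Finset.Icc (-(q : ℤ)) (q : ℤ)} → Ω → ℝ)
    (m : {n : ℤ // n ∈ Finset.Icc (-(q : ℤ)) (q : ℤ)} → ℝ)
    (v : {n : ℤ // n ∈ Finset.Icc (-(q : ℤ)) (q : ℤ)} → ℝ≥0)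
    (hindep : iIndepFun X ℙ)
    (hgauss : ∀ n, Measure.map (X n) ℙ = gaussianReal (m n) (v n))
    (t : ℝ) :
    variance (fun ω => ∑ n : {n : ℤ // n ∈ Finset.Icc (-(q : ℤ)) (q : ℤ)}, sinc (t - ((n : ℤ) : ℝ)) * X n ω) ℙ =
        ∑ n : {n : ℤ // n ∈ Finset.Icc (-(q : ℤ)) (q : ℤ)}, sinc (t - ((n : ℤ) : ℝ)) ^ 2 * ((v n : ℝ)) ∧
    variance (fun ω => ∑ n : {n : ℤ // n ∈ Finset.Icc (-(q : ℤ)) (q : ℤ)}, sinc (t - ((n : ℤ) : ℝ)) * X n ω) ℙ ≤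
        (3 + 4 / π ^ 2) * ⨆ n, ((v n : ℝ)) := by
  have hlaw n : HasLaw (X n) (gaussianReal (m n) (v n)) ℙ :=
    ⟨.of_map_ne_zero (hgauss n ▸ IsProbabilityMeasure.ne_zero _), hgauss n⟩
  have hvar := hindep.variance_fun_sum_const_mul
    (fun n => (hlaw n).hasGaussianLaw.memLp_two) fun n => sinc (t - ((n : ℤ) : ℝ))
  simp only [(hlaw _).variance_eq, variance_id_gaussianReal] at hvar
  have hsinc : ∑ n : Finset.Icc (-(q : ℤ)) q, sinc (t - ((n : ℤ) : ℝ)) ^ 2 ≤ 3 + 4 / π ^ 2 := by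
    rw [Finset.sum_coe_sort (Finset.Icc (-(q : ℤ)) q) fun n : ℤ => sinc (t - n) ^ 2]
    linarith [sum_sinc_sq_sub_int_le t (Finset.Icc (-(q : ℤ)) q), (by positivity : 0 ≤ 4 / π ^ 2)]
  refine ⟨hvar, hvar ▸ (Finset.sum_mul_le_sum_mul_ciSup fun _ => sq_nonneg _).trans ?_⟩
  exact mul_le_mul_of_nonneg_right hsinc (Real.iSup_nonneg fun n => (v n).coe_nonneg)

/-- Variance propagation through cardinal sine interpolation: for independent Gaussian
random variables `X n ~ N(m n, v n)`, `n ∈ {-q, …, q}`, the interpolant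
`X_interp(t) = ∑ₙ sinc(t - n) Xₙ` has variance `∑ₙ sinc²(t - n) vₙ`, which is at most
`(3 + 4/π²) maxₙ vₙ`. -/
theorem sinc_variance_propagation
    (q : ℕ) {Ω : Type*} [MeasureSpace Ω] [IsProbabilityMeasure (ℙ : Measure Ω)]
    (X : {n : ℤ // n ∈ Finset.Icc (-(q : ℤ)) (q : ℤ)} → Ω → ℝ)
    (m : {n : ℤ // n ∈ Finset.Icc (-(q : ℤ)) (q : ℤ)} → ℝ)
    (v : {n : ℤ // n ∈ Finset.Icc (-(q : ℤ)) (q : ℤ)} → ℝ≥0)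
    (hmeas : ∀ n, Measurable (X n))
    (hindep : iIndepFun X ℙ)
    (hgauss : ∀ n, Measure.map (X n) ℙ = gaussianReal (m n) (v n))
    (t : ℝ) :
    variance (fun ω => ∑ n : {n : ℤ // n ∈ Finset.Icc (-(q : ℤ)) (q : ℤ)}, sinc (t - ((n : ℤ) : ℝ)) * X n ω) ℙ =
        ∑ n : {n : ℤ // n ∈ Finset.Icc (-(q : ℤ)) (q : ℤ)}, sinc (t - ((n : ℤ) : ℝ)) ^ 2 * ((v n : ℝ)) ∧
    variance (fun ω => ∑ n : {n : ℤ // n ∈ Finset.Icc (-(q : ℤ)) (q : ℤ)}, sinc (t - ((n : ℤ) : ℝ)) * X n ω) ℙ ≤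
        (3 + 4 / π ^ 2) * ⨆ n, ((v n : ℝ)) :=
  sinc_variance_propagation_general q X m v hindep hgauss t
end

section
/- For every $\sigma > 0$ and every integer $q \ge 0$, $\sum_{n \in \mathbb{Z},\, |n| \ge q+1} \frac{1}{\sigma\sqrt{2\pi}}\exp\Big(-\frac{n^2}{2\sigma^2}\Big) \le \exp\Big(-\frac{q^2}{2\sigma^2}\Big)$. -/
/-!
For `b > 0`, `q ≥ 0` and `m ≥ 1`, `(m + q)² ≥ m² + q²` gives
`exp (-b (m + q)²) ≤ exp (-b q²) exp (-b m²)`, so each one-sided tail is at most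
`exp (-b q²) ∑_{m ≥ 1} exp (-b m²)`. The integral test bounds that sum by
`∫_0^∞ exp (-b x²) dx = √(π / b) / 2`. With `b = 1 / (2σ²)` the two tails together
contribute `exp (-q² / (2σ²)) σ √(2π)`, which the normalisation `1 / (σ √(2π))` cancels.
-/

open Real Set

theorem HasSum.subtype_add_one_le_abs {α : Type*} [AddCommGroup α] [TopologicalSpace α]
    [IsTopologicalAddGroup α] {f : ℤ → α} {a a' : α} (q : ℕ)
    (hpos : HasSum (fun n : ℕ => f (n + q + 1)) a)
    (hneg : HasSum (fun n : ℕ => f (-(n + q + 1))) a') :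
    HasSum (fun n : {n : ℤ // (q : ℤ) + 1 ≤ |n|} => f n) (a + a') := by
  set S := {n : ℤ | (q : ℤ) + 1 ≤ |n|}
  refine (hasSum_subtype_iff_indicator (s := S)).2 ?_
  refine HasSum.of_nat_of_neg_add_one ?_ ?_
  · rw [← hasSum_nat_add_iff' (q + 1)]
    have hzero : ∀ i ∈ Finset.range (q + 1), S.indicator f i = 0 :=
      fun i hi => indicator_of_notMem
        (by simp only [Finset.mem_range, S, mem_ofPred_eq, not_le, abs_lt] at hi ⊢; omega) f
    rw [Finset.sum_eq_zero hzero, sub_zero]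
    refine hpos.congr_fun fun n => ?_
    rw [indicator_of_mem (by simp only [S, mem_ofPred_eq, le_abs]; omega)]
    push_cast; ring_nf
  · rw [← hasSum_nat_add_iff' q]
    have hzero : ∀ i ∈ Finset.range q, S.indicator f (-(i + 1)) = 0 :=
      fun i hi => indicator_of_notMem
        (by simp only [Finset.mem_range, S, mem_ofPred_eq, not_le, abs_lt] at hi ⊢; omega) f
    rw [Finset.sum_eq_zero hzero, sub_zero]
    refine hneg.congr_fun fun n => ?_
    rw [indicator_of_mem (by simp only [S, mem_ofPred_eq, le_abs]; omega)]
    push_cast; ring_nf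

theorem antitoneOn_exp_neg_mul_sq {b : ℝ} (hb : 0 ≤ b) :
    AntitoneOn (fun x : ℝ => exp (-b * x ^ 2)) (Ici 0) := fun x hx y _ hxy =>
  exp_le_exp.2 (by nlinarith [mul_le_mul hxy hxy hx (le_trans hx hxy)])

theorem summable_exp_neg_mul_sq_nat {b : ℝ} (hb : 0 < b) :
    Summable fun n : ℕ => exp (-b * (n : ℝ) ^ 2) :=
  (antitoneOn_exp_neg_mul_sq hb.le).summable_of_integrableOn_Ioi_zero
    (integrable_exp_neg_mul_sq hb).integrableOn fun _ _ => (exp_pos _).le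

theorem tsum_exp_neg_mul_add_one_sq_le {b : ℝ} (hb : 0 < b) :
    ∑' n : ℕ, exp (-b * ((n : ℝ) + 1) ^ 2) ≤ √(π / b) / 2 := by
  have h := (antitoneOn_exp_neg_mul_sq hb.le).tsum_add_one_le_integral
    (integrable_exp_neg_mul_sq hb).integrableOn fun _ _ => (exp_pos _).le
  rw [integral_gaussian_Ioi] at h
  exact_mod_cast h

theorem exp_neg_mul_add_sq_le {b x y : ℝ} (hb : 0 ≤ b) (hx : 0 ≤ x) (hy : 0 ≤ y) :
    exp (-b * (x + y) ^ 2) ≤ exp (-b * x ^ 2) * exp (-b * y ^ 2) := by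
  rw [← exp_add]
  exact exp_le_exp.2 (by nlinarith [mul_nonneg hb (mul_nonneg hx hy)])

theorem tsum_exp_neg_mul_sq_tail_le {b : ℝ} (hb : 0 < b) (q : ℕ) :
    ∑' n : ℕ, exp (-b * ((n : ℝ) + q + 1) ^ 2) ≤
      exp (-b * (q : ℝ) ^ 2) * (√(π / b) / 2) := by
  have hsum : Summable fun n : ℕ => exp (-b * ((n : ℝ) + 1) ^ 2) := by
    simpa using (summable_nat_add_iff 1).2 (summable_exp_neg_mul_sq_nat hb)
  have hle : ∀ n : ℕ, exp (-b * ((n : ℝ) + q + 1) ^ 2) ≤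
      exp (-b * (q : ℝ) ^ 2) * exp (-b * ((n : ℝ) + 1) ^ 2) := fun n => by
    convert exp_neg_mul_add_sq_le hb.le q.cast_nonneg (by positivity : (0 : ℝ) ≤ n + 1) using 3
    ring
  have hsum' := hsum.mul_left (exp (-b * (q : ℝ) ^ 2))
  calc ∑' n : ℕ, exp (-b * ((n : ℝ) + q + 1) ^ 2)
      ≤ ∑' n : ℕ, exp (-b * (q : ℝ) ^ 2) * exp (-b * ((n : ℝ) + 1) ^ 2) :=
        (hsum'.of_nonneg_of_le (fun _ => (exp_pos _).le) hle).tsum_le_tsum hle hsum'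
    _ = exp (-b * (q : ℝ) ^ 2) * ∑' n : ℕ, exp (-b * ((n : ℝ) + 1) ^ 2) := tsum_mul_left
    _ ≤ exp (-b * (q : ℝ) ^ 2) * (√(π / b) / 2) := by
        gcongr
        exact tsum_exp_neg_mul_add_one_sq_le hb

/-- Gaussian sample-tail bound: the total weight of the Gaussian window
`w(t) = exp(-t²/(2σ²))/(σ√(2π))` sampled at integers with `|n| ≥ q + 1` is at most
`exp(-q²/(2σ²))`. -/
theorem gaussian_integer_tail_bound (σ : ℝ) (hσ : 0 < σ) (q : ℕ) :
    ∑' n : {n : ℤ // (q : ℤ) + 1 ≤ |n|},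
        (1 / (σ * Real.sqrt (2 * π))) * Real.exp (-(((n : ℤ) : ℝ)) ^ 2 / (2 * σ ^ 2)) ≤
      Real.exp (-(q : ℝ) ^ 2 / (2 * σ ^ 2)) := by
  obtain ⟨b, hb_def⟩ : ∃ b : ℝ, b = (2 * σ ^ 2)⁻¹ := ⟨_, rfl⟩
  have hb : 0 < b := by rw [hb_def]; positivity
  have hexp : ∀ x : ℝ, -x ^ 2 / (2 * σ ^ 2) = -b * x ^ 2 := fun x => by rw [hb_def]; ring
  have hnorm : 1 / (σ * √(2 * π)) * √(π / b) = 1 := by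
    rw [show π / b = (σ * √(2 * π)) ^ 2 by
      rw [hb_def, mul_pow, sq_sqrt (by positivity)]; field_simp, sqrt_sq (by positivity)]
    field_simp
  have hT : Summable fun n : ℕ => exp (-b * ((n : ℝ) + q + 1) ^ 2) := by
    simpa [add_assoc] using (summable_nat_add_iff (q + 1)).2 (summable_exp_neg_mul_sq_nat hb)
  have hsplit :
      HasSum (fun n : {n : ℤ // (q : ℤ) + 1 ≤ |n|} => exp (-b * ((n : ℤ) : ℝ) ^ 2))
        (2 * ∑' n : ℕ, exp (-b * ((n : ℝ) + q + 1) ^ 2)) := by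
    rw [two_mul]
    exact HasSum.subtype_add_one_le_abs (f := fun n : ℤ => exp (-b * (n : ℝ) ^ 2)) q
      (hT.hasSum.congr_fun fun n => by push_cast; ring_nf)
      (hT.hasSum.congr_fun fun n => by push_cast; ring_nf)
  simp only [hexp]
  rw [tsum_mul_left, hsplit.tsum_eq]
  calc _ ≤ 1 / (σ * √(2 * π)) * (2 * (exp (-b * (q : ℝ) ^ 2) * (√(π / b) / 2))) := by
        gcongr; exact tsum_exp_neg_mul_sq_tail_le hb q
    _ = exp (-b * (q : ℝ) ^ 2) := by linear_combination exp (-b * (q : ℝ) ^ 2) * hnorm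
end
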